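/- arXiv:2112.04085 — 2 statements merged into one kernel-verified Lean document; each statement's English description precedes it below -/
import Mathlib

section
/- Let N, Q, R be real n×n matrices and ε > 0. Then the matrix A = (N Nᵀ + ε I)⁻¹ · (−Q Qᵀ − ε I + (1/2)(R − Rᵀ)) is Hurwitz, i.e., every eigenvalue λ ∈ ℂ of A satisfies Re(λ) < 0. -/
/-!
If `A v = μ v` with `v ≠ 0`, write `P = N Nᵀ + ε I`, `G = Q Qᵀ + ε I` and `K = ½ (R - Rᵀ)`, so
that `P A = -G + K`. Pairing with `v*` gives `-v* G v + v* K v = μ · v* P v`. Here `v* P v` and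
`v* G v` are positive reals while `v* K v` is purely imaginary because `K` is skew-symmetric;
taking real parts yields `Re μ · v* P v = -v* G v < 0`.
-/

open Matrix Complex ComplexOrder

namespace Matrix

theorem conjTranspose_map_ofReal {m n : Type*} (M : Matrix m n ℝ) :
    (M.map ofReal)ᴴ = Mᵀ.map ofReal := by
  ext i j
  simp

variable {n : Type*} [Fintype n]

theorem exists_mulVec_eq_smul_of_mem_spectrum {K : Type*} [Field K] [DecidableEq n]
    {A : Matrix n n K} {μ : K} (hμ : μ ∈ spectrum K A) : ∃ v ≠ 0, A *ᵥ v = μ • v := by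
  rw [← spectrum_toLin', ← Module.End.hasEigenvalue_iff_mem_spectrum] at hμ
  obtain ⟨v, hv⟩ := hμ.exists_hasEigenvector
  exact ⟨v, hv.2, by simpa using hv.apply_eq_smul⟩

section RCLike

variable {𝕜 : Type*} [RCLike 𝕜]

theorem posDef_mul_conjTranspose_add_smul_one [DecidableEq n] (B : Matrix n n 𝕜) {ε : ℝ}
    (hε : 0 < ε) : (B * Bᴴ + (ε : 𝕜) • 1).PosDef :=
  .posSemidef_add (posSemidef_self_mul_conjTranspose B) (.smul .one (RCLike.ofReal_pos.2 hε))

theorem star_dotProduct_conjTranspose_mulVec (K : Matrix n n 𝕜) (v : n → 𝕜) :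
    star v ⬝ᵥ Kᴴ *ᵥ v = star (star v ⬝ᵥ K *ᵥ v) := by
  rw [star_dotProduct, star_mulVec, conjTranspose_conjTranspose, dotProduct_mulVec]

theorem re_star_dotProduct_mulVec_eq_zero_of_conjTranspose_eq_neg {K : Matrix n n 𝕜} (hK : Kᴴ = -K) (v : n → 𝕜) :
    RCLike.re (star v ⬝ᵥ K *ᵥ v) = 0 := by
  have h := congrArg RCLike.re (star_dotProduct_conjTranspose_mulVec K v)
  rw [hK, neg_mulVec, dotProduct_neg, map_neg, RCLike.star_def, RCLike.conj_re] at h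
  linarith

theorem PosDef.re_lt_zero_of_mem_spectrum [DecidableEq n] {P G K A : Matrix n n 𝕜}
    (hP : P.PosDef) (hG : G.PosDef) (hK : Kᴴ = -K) (hPA : P * A = -G + K) {μ : 𝕜} (hμ : μ ∈ spectrum 𝕜 A) :
    RCLike.re μ < 0 := by
  obtain ⟨v, hv0, hv⟩ := exists_mulVec_eq_smul_of_mem_spectrum hμ
  have hquad : -(star v ⬝ᵥ G *ᵥ v) + star v ⬝ᵥ K *ᵥ v = μ * (star v ⬝ᵥ P *ᵥ v) := by
    rw [← dotProduct_neg, ← dotProduct_add, ← neg_mulVec, ← add_mulVec, ← hPA, ← mulVec_mulVec,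
      hv, mulVec_smul, dotProduct_smul, smul_eq_mul]
  obtain ⟨hp_re, hp_im⟩ := RCLike.pos_iff.1 (hP.dotProduct_mulVec_pos hv0)
  have hg_re := hG.re_dotProduct_pos hv0
  have h := congrArg RCLike.re hquad
  rw [map_add, map_neg, re_star_dotProduct_mulVec_eq_zero_of_conjTranspose_eq_neg hK, RCLike.mul_re, hp_im] at h
  nlinarith

end RCLike

theorem posDef_map_ofReal_mul_transpose_add_smul_one [DecidableEq n] (B : Matrix n n ℝ)
    {ε : ℝ} (hε : 0 < ε) : ((B * Bᵀ + ε • 1).map ofReal).PosDef := by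
  have h : (B * Bᵀ + ε • 1).map ofReal = B.map ofReal * (B.map ofReal)ᴴ + (ε : ℂ) • 1 := by
    ext i j
    simp [mul_apply, one_apply, apply_ite ofReal]
  exact h ▸ posDef_mul_conjTranspose_add_smul_one _ hε

end Matrix

/-- the parameterization A = (NNᵀ + εI)⁻¹(−QQᵀ − εI + ½(R − Rᵀ)) yields a
Hurwitz matrix: every complex eigenvalue has negative real part. -/
theorem param_matrix_hurwitz {n : ℕ} (N Q R : Matrix (Fin n) (Fin n) ℝ) (ε : ℝ) (hε : 0 < ε)
    (A : Matrix (Fin n) (Fin n) ℝ)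
    (hA : A = (N * Nᵀ + ε • (1 : Matrix (Fin n) (Fin n) ℝ))⁻¹ *
      (-(Q * Qᵀ) - ε • (1 : Matrix (Fin n) (Fin n) ℝ) + (1/2 : ℝ) • (R - Rᵀ))) :
    ∀ μ ∈ spectrum ℂ (A.map (Complex.ofReal)), μ.re < 0 := by
  intro μ hμ
  have hP : (N * Nᵀ + ε • (1 : Matrix (Fin n) (Fin n) ℝ)).PosDef := by
    simpa using posDef_mul_conjTranspose_add_smul_one N hε
  have hPA : (N * Nᵀ + ε • 1) * A = -(Q * Qᵀ + ε • 1) + (1/2 : ℝ) • (R - Rᵀ) := by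
    rw [hA, mul_nonsing_inv_cancel_left _ _ hP.det_pos.ne'.isUnit]
    abel
  have hskew : ((1/2 : ℝ) • (R - Rᵀ))ᵀ = -((1/2 : ℝ) • (R - Rᵀ)) := by
    rw [transpose_smul, transpose_sub, transpose_transpose, ← smul_neg, neg_sub]
  refine (posDef_map_ofReal_mul_transpose_add_smul_one N hε).re_lt_zero_of_mem_spectrum
    (K := ((1/2 : ℝ) • (R - Rᵀ)).map ofReal)
    (posDef_map_ofReal_mul_transpose_add_smul_one Q hε) ?_ ?_ hμ
  · rw [conjTranspose_map_ofReal, hskew]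
    ext i j
    simp
  · calc _ = ((N * Nᵀ + ε • 1) * A).map ofReal := (Matrix.map_mul (f := ofRealHom)).symm
      _ = _ := by rw [hPA]; ext i j; simp
end

section
/- Suppose ψ : ℝᵈ → ℝᴰ is a continuous immersion with ψ(0) = 0 which is proper on the relevant domain, A ∈ ℝ^{D×D} is Hurwitz, and the flow of ẋ = f(x) satisfies ψ(x(t)) = exp(tA) ψ(x(0)) for all t ≥ 0 and all initial conditions; additionally assume ψ is injective. Then x(t) → some point in ψ⁻¹({0}) as t → ∞ for every initial condition; in particular if ψ⁻¹({0}) = {0}, then x(t) → 0. -/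
/-!
Over `ℂ`, every vector is a sum of generalized eigenvectors of `A`. On the generalized
eigenspace of `μ`, `exp (t A) v = e^{tμ} ∑_{k<K} t^k/k! (A - μ)^k v`, which tends to `0`
because `Re μ < 0`; taking real parts gives `exp (t A) z → 0` for real `z`. Thus
`ψ (x t) → 0 = ψ 0`, and since a continuous, injective, proper map is a closed embedding,
`x t → 0`.
-/

open Matrix Filter Topology NormedSpace Finset Nat

theorem Complex.tendsto_exp_mul_mul_pow_atTop {μ : ℂ} (hμ : μ.re < 0) (k : ℕ) :
    Tendsto (fun t : ℝ => Complex.exp (t * μ) * (t : ℂ) ^ k) atTop (𝓝 0) := by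
  rw [tendsto_zero_iff_norm_tendsto_zero]
  refine (isLittleO_pow_exp_pos_mul_atTop k (neg_pos.2 hμ)).tendsto_div_nhds_zero.congr' ?_
  filter_upwards [eventually_ge_atTop 0] with t ht
  rw [norm_mul, Complex.norm_exp, norm_pow, Complex.norm_real, Real.norm_of_nonneg ht,
    div_eq_mul_inv, ← Real.exp_neg, mul_comm]
  simp [mul_comm]

namespace Matrix

variable {n 𝕂 : Type*} [Fintype n] [DecidableEq n] [RCLike 𝕂]

def IsHurwitz (M : Matrix n n ℂ) : Prop := ∀ μ ∈ spectrum ℂ M, μ.re < 0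

/- `exp` on matrices depends only on the topology; the operator norm is opened locally just to
use the Banach-algebra lemmas about `NormedSpace.exp`. -/
theorem hasSum_exp_mulVec (N : Matrix n n 𝕂) (v : n → 𝕂) :
    HasSum (fun k => (k ! : 𝕂)⁻¹ • (N ^ k *ᵥ v)) (exp N *ᵥ v) := by
  open scoped Norms.Operator in
  have hsum := (exp_series_hasSum_exp' (𝕂 := 𝕂) N).map (mulVec.addMonoidHomLeft v)
    (continuous_id.matrix_mulVec continuous_const)
  convert hsum using 2 with k
  · exact (smul_mulVec _ _ _).symm
  · rfl

theorem exp_mulVec_eq_sum_of_pow_mulVec_eq_zero {N : Matrix n n 𝕂} {v : n → 𝕂} {K : ℕ}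
    (hv : N ^ K *ᵥ v = 0) : exp N *ᵥ v = ∑ k ∈ range K, (k ! : 𝕂)⁻¹ • (N ^ k *ᵥ v) :=
  (hasSum_exp_mulVec N v).unique <| hasSum_sum_of_ne_finset_zero fun k hk => by
    rw [← pow_sub_mul_pow N (not_lt.1 (mem_range.not.1 hk)), ← mulVec_mulVec, hv, mulVec_zero,
      smul_zero]

theorem exp_smul_eq_exp_mul_smul_exp_smul_sub (M : Matrix n n 𝕂) (s μ : 𝕂) :
    exp (s • M) = exp (s * μ) • exp (s • (M - μ • 1)) := by
  have hsplit : s • M = algebraMap 𝕂 _ (s * μ) + s • (M - μ • 1) := by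
    rw [Algebra.algebraMap_eq_smul_one, smul_sub, smul_smul]
    abel
  rw [hsplit, exp_add_of_commute _ _ (Algebra.commute_algebraMap_left _ _), Algebra.smul_def (exp (s * μ))]
  open scoped Norms.Operator in
  exact congrArg (· * exp (s • (M - μ • 1))) (algebraMap_exp_comm (s * μ)).symm

theorem tendsto_exp_smul_mulVec_of_pow_sub_smul_mulVec_eq_zero {M : Matrix n n ℂ} {μ : ℂ}
    (hμ : μ.re < 0) {v : n → ℂ} {K : ℕ} (hv : (M - μ • 1) ^ K *ᵥ v = 0) :
    Tendsto (fun t : ℝ => exp ((t : ℂ) • M) *ᵥ v) atTop (𝓝 0) := by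
  have hexp : ∀ t : ℝ, exp ((t : ℂ) • M) *ᵥ v = ∑ k ∈ range K,
      (Complex.exp (t * μ) * (t : ℂ) ^ k) • ((k ! : ℂ)⁻¹ • ((M - μ • 1) ^ k *ᵥ v)) := by
    intro t
    have hv' : ((t : ℂ) • (M - μ • 1)) ^ K *ᵥ v = 0 := by
      rw [smul_pow, smul_mulVec, hv, smul_zero]
    rw [exp_smul_eq_exp_mul_smul_exp_smul_sub _ _ μ, smul_mulVec,
      exp_mulVec_eq_sum_of_pow_mulVec_eq_zero hv', smul_sum, ← Complex.exp_eq_exp_ℂ]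
    refine sum_congr rfl fun k _ => ?_
    rw [smul_pow, smul_mulVec, smul_comm _ ((t : ℂ) ^ k), smul_smul, smul_smul]
  simp_rw [hexp]
  simpa using tendsto_finsetSum (range K) fun k _ =>
    (Complex.tendsto_exp_mul_mul_pow_atTop hμ k).smul_const ((k ! : ℂ)⁻¹ • ((M - μ • 1) ^ k *ᵥ v))

theorem IsHurwitz.tendsto_exp_smul_mulVec {M : Matrix n n ℂ} (hM : M.IsHurwitz) (v : n → ℂ) :
    Tendsto (fun t : ℝ => exp ((t : ℂ) • M) *ᵥ v) atTop (𝓝 0) := by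
  have hv : v ∈ ⨆ μ, Module.End.maxGenEigenspace M.toLin' μ := by
    rw [Module.End.iSup_maxGenEigenspace_eq_top]
    trivial
  refine Submodule.iSup_induction _ hv
    (motive := fun w => Tendsto (fun t : ℝ => exp ((t : ℂ) • M) *ᵥ w) atTop (𝓝 0))
    (fun μ w hw => ?_) (by simp) fun w₁ w₂ h₁ h₂ => by simpa [mulVec_add] using h₁.add h₂
  rcases eq_or_ne w 0 with rfl | hw0
  · simp
  obtain ⟨K, hK⟩ := (Module.End.mem_maxGenEigenspace _ _ _).1 hw
  have hμ : Module.End.HasEigenvalue M.toLin' μ :=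
    Module.End.HasUnifEigenvalue.lt (k := ⊤) zero_lt_one fun h => hw0 (by simpa [h] using hw)
  refine tendsto_exp_smul_mulVec_of_pow_sub_smul_mulVec_eq_zero (hM μ ?_) (K := K) ?_
  · simpa using hμ.mem_spectrum
  · rwa [← toLin'_apply, toLin'_pow, map_sub, map_smul, toLin'_one, ← Module.End.one_eq_id]

theorem map_ofReal_exp (A : Matrix n n ℝ) :
    (exp A).map Complex.ofReal = exp (A.map Complex.ofReal) :=
  open scoped Norms.Operator in
  map_exp (Complex.ofRealHom.mapMatrix (m := n))
    (continuous_id.matrix_map Complex.continuous_ofReal) A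

theorem tendsto_exp_smul_mulVec_of_isHurwitz_map_ofReal {A : Matrix n n ℝ}
    (hA : (A.map Complex.ofReal).IsHurwitz) (u : n → ℝ) :
    Tendsto (fun t : ℝ => exp (t • A) *ᵥ u) atTop (𝓝 0) := by
  have hre : Continuous fun w : n → ℂ => fun i => (w i).re := by fun_prop
  have hlim := (hre.tendsto 0).comp (hA.tendsto_exp_smul_mulVec (Complex.ofReal ∘ u))
  simp only [Function.comp_def] at hlim
  refine hlim.congr fun t => funext fun i => ?_
  have hsmul : (t : ℂ) • A.map Complex.ofReal = (t • A).map Complex.ofReal := by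
    ext
    simp
  rw [hsmul, ← map_ofReal_exp]
  exact (congrArg Complex.re (Complex.ofRealHom.map_mulVec (exp (t • A)) u i).symm).trans
    (Complex.ofReal_re _)

end Matrix

theorem stable_linear_predictor_convergence_general {d D : ℕ}
    (ψ : (Fin d → ℝ) → (Fin D → ℝ))
    (hcont : Continuous ψ)
    (hinj : Function.Injective ψ) (h0 : ψ 0 = 0)
    (hproper : ∀ K : Set (Fin D → ℝ), IsCompact K → IsCompact (ψ ⁻¹' K))
    (A : Matrix (Fin D) (Fin D) ℝ)
    (hA : ∀ μ ∈ spectrum ℂ (A.map (Complex.ofReal)), μ.re < 0)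
    (x : (Fin d → ℝ) → ℝ → (Fin d → ℝ))
    (hflow : ∀ x₀ : Fin d → ℝ, ∀ t : ℝ, 0 ≤ t →
      ψ (x x₀ t) = (NormedSpace.exp (t • A)).mulVec (ψ x₀)) :
    (∀ x₀, ∃ q, ψ q = 0 ∧ Tendsto (x x₀) atTop (𝓝 q)) ∧
    (ψ ⁻¹' {0} = {0} → ∀ x₀, Tendsto (x x₀) atTop (𝓝 (0 : Fin d → ℝ))) := by
  have hemb : IsClosedEmbedding ψ :=
    .of_continuous_injective_isClosedMap hcont hinj
      (isProperMap_iff_isCompact_preimage.2 ⟨hcont, hproper⟩).isClosedMap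
  have hx : ∀ x₀, Tendsto (x x₀) atTop (𝓝 0) := fun x₀ => by
    rw [hemb.isEmbedding.tendsto_nhds_iff, Function.comp_def, h0]
    refine (tendsto_exp_smul_mulVec_of_isHurwitz_map_ofReal hA (ψ x₀)).congr' ?_
    filter_upwards [eventually_ge_atTop 0] with t ht using (hflow x₀ t ht).symm
  exact ⟨fun x₀ => ⟨0, h0, hx x₀⟩, fun _ => hx⟩

/-- if ψ is a continuous, injective, proper immersion with ψ(0) = 0,
A is Hurwitz, and the flow satisfies ψ(x(t)) = exp(tA) ψ(x(0)) for t ≥ 0, then every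
trajectory converges to a point of ψ⁻¹({0}); in particular if ψ⁻¹({0}) = {0} then
every trajectory converges to 0. -/
theorem stable_linear_predictor_convergence {d D : ℕ}
    (ψ : (Fin d → ℝ) → (Fin D → ℝ))
    (hcont : Continuous ψ) (hdiff : Differentiable ℝ ψ)
    (himm : ∀ x, Function.Injective (fderiv ℝ ψ x))
    (hinj : Function.Injective ψ) (h0 : ψ 0 = 0)
    (hproper : ∀ K : Set (Fin D → ℝ), IsCompact K → IsCompact (ψ ⁻¹' K))
    (A : Matrix (Fin D) (Fin D) ℝ)
    (hA : ∀ μ ∈ spectrum ℂ (A.map (Complex.ofReal)), μ.re < 0)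
    (x : (Fin d → ℝ) → ℝ → (Fin d → ℝ))
    (hflow : ∀ x₀ : Fin d → ℝ, ∀ t : ℝ, 0 ≤ t →
      ψ (x x₀ t) = (NormedSpace.exp (t • A)).mulVec (ψ x₀)) :
    (∀ x₀, ∃ q, ψ q = 0 ∧ Tendsto (x x₀) atTop (𝓝 q)) ∧
    (ψ ⁻¹' {0} = {0} → ∀ x₀, Tendsto (x x₀) atTop (𝓝 (0 : Fin d → ℝ))) :=
  stable_linear_predictor_convergence_general ψ hcont hinj h0 hproper A hA x hflow
end
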